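/- Let c > 0, let (r_n) satisfy 0 ≤ r_n < 1 and n·r_n = c + O(n^{-1}), and let x = a_x + i b_x, y = a_y + i b_y be complex with a_x, a_y > 0 and c(a_x + a_y) ≥ 1. For any u ≥ 1: if c(a_x+a_y) = 1 then ∑_{k=m_0}^{n−1} r_k^{2u} (|p_n(x)||p_n(y)|/(|p_k(x)||p_k(y)|))^u = O(ln(n)/n) for u = 1 and O(n^{-u}) for u > 1; if c(a_x+a_y) > 1 then for e ∈ {0,1,2}, ∑_{k=m_0}^{n−1} r_k^{2u} ln^{eu}(n/k) (|p_n(x)||p_n(y)|/(|p_k(x)||p_k(y)|))^u equals O(n^{-uc(a_x+a_y)} ln^{eu}(n)) when uc(a_x+a_y) < 2u−1, O(n^{-(2u−1)} ln^{eu+1}(n)) when uc(a_x+a_y) = 2u−1, and O(n^{-(2u−1)}) when uc(a_x+a_y) > 2u−1. -/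

import Mathlib

/-!
Write `s = c (a_x + a_y)` and `q_m = |1 - x r_m| |1 - y r_m|`, so that the quotient of partial
products in the summand is `∏_{k < m ≤ n} q_m`. Since `r_m = c/m + O(m⁻²)`, we have
`log q_m ≤ -s/m + O(m⁻²)`; summing, and comparing `∑_{k < m ≤ n} 1/m` with `log ((n+1)/(k+1))`,
gives `∏_{k < m ≤ n} q_m ≤ C (k/n)^s`. Together with `r_k ≤ C/k`, the `k`-th summand is at most
`C n^{-us} k^{us-2u} log^p (n/k)`, which reduces everything to the model sums
`∑_{k < n} k^α log^p (n/k)` with `α = us - 2u`. These are `O(log^p n)` when `α < -1` (a convergent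
series), `O(log^{p+1} n)` when `α = -1` (a harmonic sum), and `O(n^{α+1})` when `α > -1`.
-/

open Filter Topology

noncomputable section

/-- `p_n(x) = ∏_{m=m₀}^n (1 - x r_m)` (so that `p_{m₀-1}(x) = 1`, the empty product).
The quotient `p_n(x)/p_k(x)` is the paper's `F_{k+1,n}(x)`. -/
def pprod (r : ℕ → ℝ) (m0 : ℕ) (x : ℂ) (n : ℕ) : ℂ :=
  ∏ m ∈ Finset.Icc m0 n, (1 - x * (r m : ℂ))

open Asymptotics Finset

lemma isBigO_of_nonneg_of_le_const_mul {α : Type*} {l : Filter α} {f g : α → ℝ} (C : ℝ)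
    (hf : ∀ a, 0 ≤ f a) (h : ∀ᶠ a in l, f a ≤ C * g a) : f =O[l] g :=
  (IsBigO.of_norm_eventuallyLE (h.mono fun a ha =>
    (Real.norm_of_nonneg (hf a)).trans_le ha)).trans (isBigO_const_mul_self C g l)

lemma mul_rpow_sub_one_le_rpow_sub_rpow {p t : ℝ} (hp0 : 0 ≤ p) (hp1 : p ≤ 1) (ht : 0 ≤ t) :
    p * (t + 1) ^ (p - 1) ≤ (t + 1) ^ p - t ^ p := by
  have ht1 : 0 < t + 1 := by linarith
  have hB := rpow_one_add_le_one_add_mul_self (s := -(t + 1)⁻¹)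
    (by linarith [inv_le_one_of_one_le₀ (by linarith : 1 ≤ t + 1)]) hp0 hp1
  rw [show 1 + -(t + 1)⁻¹ = t / (t + 1) by field_simp; ring,
    Real.div_rpow ht ht1.le, div_le_iff₀ (by positivity)] at hB
  rw [Real.rpow_sub_one ht1.ne']
  linarith [show (1 + p * -(t + 1)⁻¹) * (t + 1) ^ p = (t + 1) ^ p - p * ((t + 1) ^ p / (t + 1))
    by field_simp; ring]

lemma sum_Ico_one_rpow_isBigO {β : ℝ} (hβ : -1 < β) :
    (fun n : ℕ => ∑ k ∈ Ico 1 n, (k : ℝ) ^ β) =O[atTop] fun n : ℕ => (n : ℝ) ^ (β + 1) := by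
  have hnonneg : ∀ n : ℕ, 0 ≤ ∑ k ∈ Ico 1 n, (k : ℝ) ^ β := fun n =>
    sum_nonneg fun k _ => by positivity
  rcases le_or_gt 0 β with hβ0 | hβ0
  · refine isBigO_of_nonneg_of_le_const_mul 1 hnonneg (Eventually.of_forall fun n => ?_)
    calc ∑ k ∈ Ico 1 n, (k : ℝ) ^ β ≤ ∑ _k ∈ Ico 1 n, (n : ℝ) ^ β :=
          sum_le_sum fun k hk => Real.rpow_le_rpow k.cast_nonneg
            (Nat.cast_le.2 (mem_Ico.1 hk).2.le) hβ0
      _ ≤ n * (n : ℝ) ^ β := by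
          rw [sum_const, nsmul_eq_mul, Nat.card_Ico]
          gcongr
          exact_mod_cast Nat.sub_le n 1
      _ = 1 * (n : ℝ) ^ (β + 1) := by
          rcases n.eq_zero_or_pos with rfl | hn
          · simp [Real.zero_rpow (by linarith : β + 1 ≠ 0)]
          · rw [one_mul, Real.rpow_add_one (by positivity), mul_comm]
  · -- Telescoping `p (j+1)^(p-1) ≤ (j+1)^p - j^p` with `p = β + 1 ∈ (0, 1)`.
    have hp : 0 < β + 1 := by linarith
    refine isBigO_of_nonneg_of_le_const_mul (β + 1)⁻¹ hnonneg (Eventually.of_forall fun n => ?_)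
    rw [sum_Ico_eq_sum_range, le_inv_mul_iff₀ hp, mul_sum]
    calc ∑ j ∈ range (n - 1), (β + 1) * ((1 + j : ℕ) : ℝ) ^ β
        ≤ ∑ j ∈ range (n - 1), (((j + 1 : ℕ) : ℝ) ^ (β + 1) - (j : ℝ) ^ (β + 1)) :=
          sum_le_sum fun j _ => by
            simpa [add_comm] using
              mul_rpow_sub_one_le_rpow_sub_rpow hp.le (by linarith) j.cast_nonneg
      _ = ((n - 1 : ℕ) : ℝ) ^ (β + 1) := by
          rw [sum_range_sub (fun j : ℕ => (j : ℝ) ^ (β + 1))]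
          simp [Real.zero_rpow hp.ne']
      _ ≤ (n : ℝ) ^ (β + 1) :=
          Real.rpow_le_rpow (Nat.cast_nonneg _) (Nat.cast_le.2 (Nat.sub_le n 1)) hp.le

lemma log_rpow_le_mul_rpow {p δ : ℝ} (hp : 0 ≤ p) (hδ : 0 < δ) :
    ∃ C, ∀ t : ℝ, 1 ≤ t → Real.log t ^ p ≤ C * t ^ δ := by
  rcases hp.eq_or_lt with rfl | hp
  · exact ⟨1, fun t ht => by simpa using Real.one_le_rpow ht hδ.le⟩
  refine ⟨(p / δ) ^ p, fun t ht => ?_⟩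
  have ht0 : 0 ≤ t := by linarith
  have hlog : Real.log t ≤ t ^ (δ / p) * (p / δ) := by
    simpa [div_eq_mul_inv, mul_comm] using Real.log_le_rpow_div ht0 (div_pos hδ hp)
  calc Real.log t ^ p ≤ (t ^ (δ / p) * (p / δ)) ^ p :=
        Real.rpow_le_rpow (Real.log_nonneg ht) hlog hp.le
    _ = (p / δ) ^ p * t ^ δ := by
        rw [Real.mul_rpow (by positivity) (by positivity), ← Real.rpow_mul ht0,
          div_mul_cancel₀ _ hp.ne', mul_comm]

lemma log_div_nonneg_and_le_log {k n : ℕ} (hk : 1 ≤ k) (hkn : k ≤ n) :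
    0 ≤ Real.log ((n : ℝ) / k) ∧ Real.log ((n : ℝ) / k) ≤ Real.log n := by
  have hk' : (1 : ℝ) ≤ k := by exact_mod_cast hk
  have hkn' : (k : ℝ) ≤ n := by exact_mod_cast hkn
  refine ⟨Real.log_nonneg ((one_le_div (by linarith)).2 hkn'), ?_⟩
  rw [Real.log_div (by linarith) (by linarith)]
  linarith [Real.log_nonneg hk']

lemma sum_rpow_mul_log_rpow_nonneg (α p : ℝ) (n : ℕ) :
    0 ≤ ∑ k ∈ Ico 1 n, (k : ℝ) ^ α * Real.log ((n : ℝ) / k) ^ p :=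
  sum_nonneg fun k hk => mul_nonneg (by positivity) (Real.rpow_nonneg
    (log_div_nonneg_and_le_log (mem_Ico.1 hk).1 (mem_Ico.1 hk).2.le).1 p)

lemma sum_rpow_mul_log_rpow_le {p : ℝ} (hp : 0 ≤ p) (α : ℝ) (n : ℕ) :
    ∑ k ∈ Ico 1 n, (k : ℝ) ^ α * Real.log ((n : ℝ) / k) ^ p ≤
      Real.log n ^ p * ∑ k ∈ Ico 1 n, (k : ℝ) ^ α := by
  rw [mul_sum]
  refine sum_le_sum fun k hk => ?_
  obtain ⟨h0, hle⟩ := log_div_nonneg_and_le_log (mem_Ico.1 hk).1 (mem_Ico.1 hk).2.le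
  rw [mul_comm]
  gcongr

lemma sum_rpow_mul_log_rpow_isBigO_of_lt {α p : ℝ} (hα : α < -1) (hp : 0 ≤ p) :
    (fun n : ℕ => ∑ k ∈ Ico 1 n, (k : ℝ) ^ α * Real.log ((n : ℝ) / k) ^ p)
      =O[atTop] fun n : ℕ => Real.log n ^ p := by
  have hsum : Summable fun k : ℕ => (k : ℝ) ^ α := Real.summable_nat_rpow.2 hα
  refine isBigO_of_nonneg_of_le_const_mul (∑' k : ℕ, (k : ℝ) ^ α)
    (sum_rpow_mul_log_rpow_nonneg α p) (Eventually.of_forall fun n => ?_)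
  calc _ ≤ Real.log n ^ p * ∑ k ∈ Ico 1 n, (k : ℝ) ^ α := sum_rpow_mul_log_rpow_le hp α n
    _ ≤ Real.log n ^ p * ∑' k : ℕ, (k : ℝ) ^ α := by
        have := Real.rpow_nonneg (Real.log_natCast_nonneg n) p
        gcongr
        exact hsum.sum_le_tsum _ fun k _ => by positivity
    _ = _ := mul_comm _ _

lemma sum_rpow_mul_log_rpow_isBigO_of_eq {p : ℝ} (hp : 0 ≤ p) :
    (fun n : ℕ => ∑ k ∈ Ico 1 n, (k : ℝ) ^ (-1 : ℝ) * Real.log ((n : ℝ) / k) ^ p)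
      =O[atTop] fun n : ℕ => Real.log n ^ (p + 1) := by
  refine isBigO_of_nonneg_of_le_const_mul 2 (sum_rpow_mul_log_rpow_nonneg _ p)
    ((eventually_ge_atTop 3).mono fun n hn => ?_)
  have hlog : 1 ≤ Real.log n := by
    rw [Real.le_log_iff_exp_le (by positivity)]
    have h3 : (3 : ℝ) ≤ n := by exact_mod_cast hn
    linarith [Real.exp_one_lt_three]
  have hharmonic : ∑ k ∈ Ico 1 n, (k : ℝ) ^ (-1 : ℝ) ≤ 1 + Real.log n := by
    calc ∑ k ∈ Ico 1 n, (k : ℝ) ^ (-1 : ℝ) ≤ ∑ k ∈ Icc 1 n, (k : ℝ)⁻¹ := by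
          simp only [Real.rpow_neg_one]
          exact sum_le_sum_of_subset_of_nonneg Ico_subset_Icc_self fun _ _ _ => by positivity
      _ = harmonic n := by simp [harmonic_eq_sum_Icc]
      _ ≤ 1 + Real.log n := harmonic_le_one_add_log n
  calc _ ≤ Real.log n ^ p * ∑ k ∈ Ico 1 n, (k : ℝ) ^ (-1 : ℝ) :=
        sum_rpow_mul_log_rpow_le hp _ n
    _ ≤ Real.log n ^ p * (2 * Real.log n) := by gcongr; linarith
    _ = 2 * Real.log n ^ (p + 1) := by rw [Real.rpow_add_one (by positivity)]; ring

lemma sum_rpow_mul_log_rpow_isBigO_of_gt {α p : ℝ} (hα : -1 < α) (hp : 0 ≤ p) :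
    (fun n : ℕ => ∑ k ∈ Ico 1 n, (k : ℝ) ^ α * Real.log ((n : ℝ) / k) ^ p)
      =O[atTop] fun n : ℕ => (n : ℝ) ^ (α + 1) := by
  -- Trade the logarithm for a small power `(n/k)^δ`, keeping the exponent of `k` above `-1`.
  obtain ⟨δ, hδ, hαδ⟩ : ∃ δ : ℝ, 0 < δ ∧ -1 < α - δ := ⟨(α + 1) / 2, by linarith, by linarith⟩
  obtain ⟨C, hC⟩ := log_rpow_le_mul_rpow hp hδ
  have hS : (fun n : ℕ => ∑ k ∈ Ico 1 n, (k : ℝ) ^ α * Real.log ((n : ℝ) / k) ^ p)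
      =O[atTop] fun n : ℕ => (n : ℝ) ^ δ * ∑ k ∈ Ico 1 n, (k : ℝ) ^ (α - δ) := by
    refine isBigO_of_nonneg_of_le_const_mul C (sum_rpow_mul_log_rpow_nonneg α p)
      (Eventually.of_forall fun n => ?_)
    rw [mul_sum, mul_sum]
    refine sum_le_sum fun k hk => ?_
    have hk1 : (1 : ℝ) ≤ k := by exact_mod_cast (mem_Ico.1 hk).1
    have hkn : (k : ℝ) ≤ n := by exact_mod_cast (mem_Ico.1 hk).2.le
    calc (k : ℝ) ^ α * Real.log ((n : ℝ) / k) ^ p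
        ≤ (k : ℝ) ^ α * (C * ((n : ℝ) / k) ^ δ) := by
          gcongr
          exact hC _ ((one_le_div (by linarith)).2 hkn)
      _ = C * ((n : ℝ) ^ δ * (k : ℝ) ^ (α - δ)) := by
          rw [Real.div_rpow (by linarith) (by linarith), Real.rpow_sub (by linarith)]
          ring
  refine (hS.trans ((isBigO_refl _ _).mul (sum_Ico_one_rpow_isBigO hαδ))).trans_eventuallyEq
    ((eventually_gt_atTop 0).mono fun n hn => ?_)
  dsimp only
  rw [← Real.rpow_add (by exact_mod_cast hn)]
  ring_nf

lemma log_div_le_sum_Ioc_inv {k n : ℕ} (hkn : k ≤ n) :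
    Real.log (((n : ℝ) + 1) / (k + 1)) ≤ ∑ m ∈ Ioc k n, (m : ℝ)⁻¹ := by
  have hharmonic : ∀ j : ℕ, (harmonic j : ℝ) = ∑ m ∈ Ioc 0 j, (m : ℝ)⁻¹ := fun j => by
    simp [harmonic_eq_sum_Icc, ← Finset.Icc_add_one_left_eq_Ioc]
  have hmono := Real.strictMono_eulerMascheroniSeq.monotone hkn
  simp only [Real.eulerMascheroniSeq, hharmonic,
    ← sum_Ioc_consecutive _ (Nat.zero_le k) hkn] at hmono
  rw [Real.log_div (by positivity) (by positivity)]
  linarith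

lemma norm_one_sub_mul_le_exp (z : ℂ) (t : ℝ) :
    ‖1 - z * t‖ ≤ Real.exp (-(z.re * t) + ‖z‖ ^ 2 * t ^ 2 / 2) := by
  rw [← pow_le_pow_iff_left₀ (norm_nonneg _) (Real.exp_pos _).le two_ne_zero,
    ← Real.exp_nat_mul, Complex.sq_norm, Complex.sq_norm]
  calc Complex.normSq (1 - z * t)
        = (2 * (-(z.re * t) + Complex.normSq z * t ^ 2 / 2)) + 1 := by
        simp only [Complex.normSq_apply, Complex.sub_re, Complex.sub_im, Complex.mul_re,
          Complex.mul_im, Complex.ofReal_re, Complex.ofReal_im, Complex.one_re, Complex.one_im]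
        ring
    _ ≤ Real.exp ((2 : ℕ) * (-(z.re * t) + Complex.normSq z * t ^ 2 / 2)) := by
        rw [Nat.cast_ofNat]
        exact Real.add_one_le_exp _

lemma exists_prod_Ioc_le_mul_div_rpow {q : ℕ → ℝ} {s D : ℝ} (hs : 0 ≤ s) (hq : ∀ m, 0 ≤ q m)
    (hlog : ∀ᶠ m : ℕ in atTop, Real.log (q m) ≤ -(s / m) + D / m ^ 2) :
    ∃ C, 0 ≤ C ∧ ∀ k n : ℕ, 0 < k → k ≤ n → ∏ m ∈ Ioc k n, q m ≤ C * ((k : ℝ) / n) ^ s := by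
  set e : ℕ → ℝ := fun m => max (Real.log (q m) + s / m) 0
  have he : Summable e := by
    refine Summable.of_norm_bounded_eventually_nat
      ((Real.summable_one_div_nat_pow.2 one_lt_two).mul_left |D|) (hlog.mono fun m hm => ?_)
    rw [Real.norm_of_nonneg (le_max_right _ _), ← div_eq_mul_one_div]
    exact max_le (by linarith [div_le_div_of_nonneg_right (le_abs_self D) (sq_nonneg (m : ℝ))])
      (by positivity)
  refine ⟨Real.exp (∑' m, e m) * 2 ^ s, by positivity, fun k n hk hkn => ?_⟩
  have hn' : (0 : ℝ) < n := by exact_mod_cast hk.trans_le hkn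
  have hfactor : ∀ m ∈ Ioc k n, q m ≤ Real.exp (-(s * (m : ℝ)⁻¹)) * Real.exp (e m) := by
    intro m _
    rcases (hq m).eq_or_lt with h0 | hpos
    · rw [← h0]; positivity
    rw [← Real.exp_add, ← Real.exp_log hpos]
    exact Real.exp_le_exp.2
      (by linarith [le_max_left (Real.log (q m) + s / m) 0, div_eq_mul_inv s m])
  have hratio : ((k : ℝ) + 1) / (n + 1) ≤ 2 * (k / n) := by
    rw [div_le_iff₀ (by positivity), mul_div_assoc', div_mul_eq_mul_div, le_div_iff₀ hn']
    nlinarith [(by exact_mod_cast hk : (1 : ℝ) ≤ k), (by exact_mod_cast hkn : (k : ℝ) ≤ n)]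
  calc ∏ m ∈ Ioc k n, q m ≤ ∏ m ∈ Ioc k n, (Real.exp (-(s * (m : ℝ)⁻¹)) * Real.exp (e m)) :=
        prod_le_prod (fun m _ => hq m) hfactor
    _ = Real.exp (-(s * ∑ m ∈ Ioc k n, (m : ℝ)⁻¹)) * Real.exp (∑ m ∈ Ioc k n, e m) := by
        rw [prod_mul_distrib, ← Real.exp_sum, ← Real.exp_sum, mul_sum, sum_neg_distrib]
    _ ≤ Real.exp (-(s * Real.log (((n : ℝ) + 1) / (k + 1)))) * Real.exp (∑' m, e m) := by
        gcongr
        · exact log_div_le_sum_Ioc_inv hkn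
        · exact he.sum_le_tsum _ fun m _ => le_max_right _ _
    _ = (((k : ℝ) + 1) / (n + 1)) ^ s * Real.exp (∑' m, e m) := by
        rw [Real.rpow_def_of_pos (by positivity), Real.log_div (by positivity) (by positivity),
          Real.log_div (by positivity) (by positivity)]
        ring_nf
    _ ≤ (2 * ((k : ℝ) / n)) ^ s * Real.exp (∑' m, e m) := by gcongr
    _ = Real.exp (∑' m, e m) * 2 ^ s * ((k : ℝ) / n) ^ s := by
        rw [Real.mul_rpow (by norm_num) (by positivity)]
        ring

section SequenceBounds

variable {r : ℕ → ℝ} {c : ℝ}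

lemma exists_le_div_of_isBigO (hr1 : ∀ n, r n < 1)
    (hrO : (fun n : ℕ => (n : ℝ) * r n - c) =O[atTop] fun n : ℕ => (n : ℝ)⁻¹) :
    ∃ C, 0 ≤ C ∧ ∀ n : ℕ, 0 < n → r n ≤ C / n := by
  obtain ⟨C₁, hC₁, hbound⟩ := hrO.exists_nonneg
  obtain ⟨N, hN⟩ := eventually_atTop.1 hbound.bound
  refine ⟨|c| + C₁ + N, by positivity, fun n hn => ?_⟩
  have hn' : (1 : ℝ) ≤ n := by exact_mod_cast hn
  rw [le_div_iff₀ (by positivity), mul_comm]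
  rcases le_or_gt N n with hNn | hnN
  · have h := hN n hNn
    rw [Real.norm_eq_abs, Real.norm_eq_abs, abs_inv, Nat.abs_cast] at h
    have : C₁ * (n : ℝ)⁻¹ ≤ C₁ := mul_le_of_le_one_right hC₁ (inv_le_one_of_one_le₀ hn')
    linarith [le_abs_self ((n : ℝ) * r n - c), le_abs_self c, (Nat.cast_nonneg N : (0 : ℝ) ≤ N)]
  · have : (n : ℝ) < N := by exact_mod_cast hnN
    nlinarith [hr1 n, abs_nonneg c]

lemma eventually_abs_sub_div_le_of_isBigO
    (hrO : (fun n : ℕ => (n : ℝ) * r n - c) =O[atTop] fun n : ℕ => (n : ℝ)⁻¹) :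
    ∃ C, ∀ᶠ n : ℕ in atTop, |r n - c / n| ≤ C / n ^ 2 := by
  obtain ⟨C, hC⟩ := hrO.bound
  refine ⟨C, (hC.and (eventually_gt_atTop 0)).mono fun n ⟨h, hn⟩ => ?_⟩
  have hn' : (0 : ℝ) < n := by exact_mod_cast hn
  rw [Real.norm_eq_abs, Real.norm_of_nonneg (by positivity)] at h
  rw [show r n - c / n = ((n : ℝ) * r n - c) / n by field_simp, abs_div, abs_of_pos hn',
    div_le_div_iff₀ hn' (by positivity)]
  calc |(n : ℝ) * r n - c| * n ^ 2 ≤ C * (n : ℝ)⁻¹ * n ^ 2 := by gcongr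
    _ = C * n := by field_simp

lemma eventually_norm_mul_norm_le_exp (hr0 : ∀ n, 0 ≤ r n) (hr1 : ∀ n, r n < 1)
    (hrO : (fun n : ℕ => (n : ℝ) * r n - c) =O[atTop] fun n : ℕ => (n : ℝ)⁻¹) (x y : ℂ) :
    ∃ D, ∀ᶠ m : ℕ in atTop, ‖1 - x * r m‖ * ‖1 - y * r m‖ ≤
      Real.exp (-(c * (x.re + y.re) / m) + D / m ^ 2) := by
  obtain ⟨C₁, hC₁⟩ := eventually_abs_sub_div_le_of_isBigO hrO
  obtain ⟨C₂, -, hC₂⟩ := exists_le_div_of_isBigO hr1 hrO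
  set a := x.re + y.re
  set b := (‖x‖ ^ 2 + ‖y‖ ^ 2) / 2
  refine ⟨|a| * C₁ + b * C₂ ^ 2, (hC₁.and (eventually_gt_atTop 0)).mono fun m ⟨hm, hm0⟩ => ?_⟩
  calc ‖1 - x * r m‖ * ‖1 - y * r m‖
      ≤ Real.exp (-(x.re * r m) + ‖x‖ ^ 2 * r m ^ 2 / 2) *
          Real.exp (-(y.re * r m) + ‖y‖ ^ 2 * r m ^ 2 / 2) :=
        mul_le_mul (norm_one_sub_mul_le_exp x _) (norm_one_sub_mul_le_exp y _)
          (norm_nonneg _) (Real.exp_pos _).le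
    _ = Real.exp (-(c * a / m) - a * (r m - c / m) + b * r m ^ 2) := by
        rw [← Real.exp_add]; simp only [a, b]; ring_nf
    _ ≤ Real.exp (-(c * a / m) + (|a| * C₁ + b * C₂ ^ 2) / m ^ 2) := by
        refine Real.exp_le_exp.2 ?_
        have hlin : -(a * (r m - c / m)) ≤ |a| * (C₁ / m ^ 2) :=
          (neg_le_abs _).trans (by rw [abs_mul]; exact mul_le_mul_of_nonneg_left hm (abs_nonneg _))
        have hquad : r m ^ 2 ≤ (C₂ / m) ^ 2 := pow_le_pow_left₀ (hr0 m) (hC₂ m hm0) 2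
        have hb : 0 ≤ b := by positivity
        have : (|a| * C₁ + b * C₂ ^ 2) / (m : ℝ) ^ 2 =
            |a| * (C₁ / m ^ 2) + b * (C₂ / m) ^ 2 := by ring
        nlinarith [mul_le_mul_of_nonneg_left hquad hb]

end SequenceBounds

lemma one_sub_mul_ofReal_ne_zero {z : ℂ} {t : ℝ} (h : z.re * t < 1) : 1 - z * t ≠ 0 := by
  intro h0
  have hre := congrArg Complex.re h0
  simp only [Complex.sub_re, Complex.one_re, Complex.mul_re, Complex.ofReal_re,
    Complex.ofReal_im, mul_zero, sub_zero, Complex.zero_re] at hre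
  linarith

section PartialProducts

variable {r : ℕ → ℝ} {m0 : ℕ}

lemma pprod_ne_zero {z : ℂ} (h : ∀ m, m0 ≤ m → z.re * r m < 1) (n : ℕ) : pprod r m0 z n ≠ 0 :=
  prod_ne_zero_iff.2 fun m hm => one_sub_mul_ofReal_ne_zero (h m (mem_Icc.1 hm).1)

lemma pprod_eq_mul_prod_Ioc (z : ℂ) {k n : ℕ} (hk : m0 ≤ k + 1) (hkn : k ≤ n) :
    pprod r m0 z n = pprod r m0 z k * ∏ m ∈ Ioc k n, (1 - z * r m) := by
  simp only [pprod, ← Ico_add_one_right_eq_Icc, ← Ico_add_one_add_one_eq_Ioc]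
  exact (prod_Ico_consecutive _ hk (by omega)).symm

lemma norm_pprod_div_norm_pprod {z : ℂ} {k n : ℕ} (hz : pprod r m0 z k ≠ 0) (hk : m0 ≤ k + 1)
    (hkn : k ≤ n) : ‖pprod r m0 z n‖ / ‖pprod r m0 z k‖ = ∏ m ∈ Ioc k n, ‖1 - z * r m‖ := by
  rw [pprod_eq_mul_prod_Ioc z hk hkn, norm_mul, norm_prod,
    mul_div_cancel_left₀ _ (norm_ne_zero_iff.2 hz)]

end PartialProducts

lemma rpow_two_mul_mul_rpow_le {a b C P k n s u : ℝ} (ha : 0 ≤ a) (hb : 0 ≤ b) (hC : 0 ≤ C)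
    (hP : 0 ≤ P) (hk : 0 < k) (hn : 0 < n) (hu : 0 ≤ u) (haC : a ≤ C / k)
    (hbP : b ≤ P * (k / n) ^ s) :
    a ^ (2 * u) * b ^ u ≤ C ^ (2 * u) * P ^ u * (n ^ (-(u * s)) * k ^ (u * s - 2 * u)) := by
  calc a ^ (2 * u) * b ^ u ≤ (C / k) ^ (2 * u) * (P * (k / n) ^ s) ^ u := by gcongr
    _ = _ := by
        rw [Real.div_rpow hC hk.le, Real.mul_rpow hP (by positivity),
          ← Real.rpow_mul (by positivity), Real.div_rpow hk.le hn.le, Real.rpow_neg hn.le,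
          Real.rpow_sub hk, mul_comm s u]
        field_simp

theorem exists_norm_pprod_div_le_mul_div_rpow {c : ℝ} {r : ℕ → ℝ} (hr0 : ∀ n, 0 ≤ r n)
    (hr1 : ∀ n, r n < 1)
    (hrO : (fun n : ℕ => (n : ℝ) * r n - c) =O[atTop] fun n : ℕ => (n : ℝ)⁻¹)
    {x y : ℂ} (hs : 0 ≤ c * (x.re + y.re)) {m0 : ℕ}
    (hm : ∀ m, m0 ≤ m → max x.re y.re * r m < 1) :
    ∃ P, 0 ≤ P ∧ ∀ k n : ℕ, m0 ≤ k → 0 < k → k ≤ n →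
      ‖pprod r m0 x n‖ * ‖pprod r m0 y n‖ / (‖pprod r m0 x k‖ * ‖pprod r m0 y k‖) ≤
        P * ((k : ℝ) / n) ^ (c * (x.re + y.re)) := by
  have hxr : ∀ m, m0 ≤ m → x.re * r m < 1 := fun m hm' =>
    (mul_le_mul_of_nonneg_right (le_max_left _ _) (hr0 m)).trans_lt (hm m hm')
  have hyr : ∀ m, m0 ≤ m → y.re * r m < 1 := fun m hm' =>
    (mul_le_mul_of_nonneg_right (le_max_right _ _) (hr0 m)).trans_lt (hm m hm')
  obtain ⟨D, hD⟩ := eventually_norm_mul_norm_le_exp hr0 hr1 hrO x y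
  have hlog : ∀ᶠ m : ℕ in atTop,
      Real.log (‖1 - x * r m‖ * ‖1 - y * r m‖) ≤ -(c * (x.re + y.re) / m) + D / m ^ 2 := by
    filter_upwards [hD, eventually_ge_atTop m0] with m hmD hm'
    rwa [Real.log_le_iff_le_exp (mul_pos
      (norm_pos_iff.2 (one_sub_mul_ofReal_ne_zero (hxr m hm')))
      (norm_pos_iff.2 (one_sub_mul_ofReal_ne_zero (hyr m hm'))))]
  obtain ⟨P, hP0, hP⟩ := exists_prod_Ioc_le_mul_div_rpow hs (fun m => by positivity) hlog
  refine ⟨P, hP0, fun k n hk hk0 hkn => ?_⟩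
  rw [mul_div_mul_comm, norm_pprod_div_norm_pprod (pprod_ne_zero hxr k) (by omega) hkn,
    norm_pprod_div_norm_pprod (pprod_ne_zero hyr k) (by omega) hkn, ← prod_mul_distrib]
  exact hP k n hk0 hkn

def weightedSum (r : ℕ → ℝ) (m0 : ℕ) (x y : ℂ) (u p : ℝ) (n : ℕ) : ℝ :=
  ∑ k ∈ Finset.Ico m0 n, r k ^ (2 * u) * Real.log ((n : ℝ) / k) ^ p *
    (‖pprod r m0 x n‖ * ‖pprod r m0 y n‖ / (‖pprod r m0 x k‖ * ‖pprod r m0 y k‖)) ^ u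

theorem weightedSum_isBigO_rpow_mul_sum {c : ℝ} {r : ℕ → ℝ} (hr0 : ∀ n, 0 ≤ r n)
    (hr1 : ∀ n, r n < 1)
    (hrO : (fun n : ℕ => (n : ℝ) * r n - c) =O[atTop] fun n : ℕ => (n : ℝ)⁻¹)
    {x y : ℂ} (hs : 0 ≤ c * (x.re + y.re)) {m0 : ℕ} (hm0 : 1 ≤ m0)
    (hm : ∀ m, m0 ≤ m → max x.re y.re * r m < 1) {u : ℝ} (hu : 0 ≤ u) (p : ℝ) :
    (fun n => weightedSum r m0 x y u p n) =O[atTop]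
      fun n : ℕ => (n : ℝ) ^ (-(u * (c * (x.re + y.re)))) * ∑ k ∈ Ico 1 n,
        (k : ℝ) ^ (u * (c * (x.re + y.re)) - 2 * u) * Real.log ((n : ℝ) / k) ^ p := by
  obtain ⟨C, hC0, hC⟩ := exists_le_div_of_isBigO hr1 hrO
  obtain ⟨P, hP0, hP⟩ := exists_norm_pprod_div_le_mul_div_rpow hr0 hr1 hrO hs hm
  have hlog0 : ∀ n : ℕ, ∀ k ∈ Ico 1 n, 0 ≤ Real.log ((n : ℝ) / k) ^ p := fun n k hk =>
    Real.rpow_nonneg (log_div_nonneg_and_le_log (mem_Ico.1 hk).1 (mem_Ico.1 hk).2.le).1 p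
  refine isBigO_of_nonneg_of_le_const_mul (C ^ (2 * u) * P ^ u) (fun n => sum_nonneg fun k hk =>
    mul_nonneg (mul_nonneg (Real.rpow_nonneg (hr0 k) _) (hlog0 n k (Ico_subset_Ico_left hm0 hk)))
      (by positivity)) (Eventually.of_forall fun n => ?_)
  rw [weightedSum, mul_sum, mul_sum]
  refine (sum_le_sum fun k hk => ?_).trans (sum_le_sum_of_subset_of_nonneg
    (Ico_subset_Ico_left hm0) fun k hk _ => mul_nonneg (by positivity)
      (mul_nonneg (by positivity) (mul_nonneg (by positivity) (hlog0 n k hk))))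
  obtain ⟨hk, hkn⟩ := mem_Ico.1 hk
  have hk0 : (0 : ℝ) < k := by exact_mod_cast (by omega : 0 < k)
  calc r k ^ (2 * u) * Real.log ((n : ℝ) / k) ^ p *
        (‖pprod r m0 x n‖ * ‖pprod r m0 y n‖ / (‖pprod r m0 x k‖ * ‖pprod r m0 y k‖)) ^ u
      = r k ^ (2 * u) *
        (‖pprod r m0 x n‖ * ‖pprod r m0 y n‖ / (‖pprod r m0 x k‖ * ‖pprod r m0 y k‖)) ^ u *
          Real.log ((n : ℝ) / k) ^ p := by ring
    _ ≤ C ^ (2 * u) * P ^ u * ((n : ℝ) ^ (-(u * (c * (x.re + y.re)))) *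
          (k : ℝ) ^ (u * (c * (x.re + y.re)) - 2 * u)) * Real.log ((n : ℝ) / k) ^ p :=
      mul_le_mul_of_nonneg_right (rpow_two_mul_mul_rpow_le (hr0 k) (by positivity) hC0 hP0 hk0
        (hk0.trans (by exact_mod_cast hkn)) hu (hC k (by omega)) (hP k n hk (by omega) hkn.le))
        (hlog0 n k (mem_Ico.2 ⟨by omega, hkn⟩))
    _ = _ := by ring

theorem weightedSum_isBigO {c : ℝ} {r : ℕ → ℝ} (hr0 : ∀ n, 0 ≤ r n) (hr1 : ∀ n, r n < 1)
    (hrO : (fun n : ℕ => (n : ℝ) * r n - c) =O[atTop] fun n : ℕ => (n : ℝ)⁻¹)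
    {x y : ℂ} (hs : 0 ≤ c * (x.re + y.re)) {m0 : ℕ} (hm0 : 1 ≤ m0)
    (hm : ∀ m, m0 ≤ m → max x.re y.re * r m < 1) {u : ℝ} (hu : 0 ≤ u) {p : ℝ} (hp : 0 ≤ p) :
    (u * (c * (x.re + y.re)) < 2 * u - 1 → (fun n => weightedSum r m0 x y u p n) =O[atTop]
      fun n : ℕ => (n : ℝ) ^ (-(u * (c * (x.re + y.re)))) * Real.log n ^ p) ∧
    (u * (c * (x.re + y.re)) = 2 * u - 1 → (fun n => weightedSum r m0 x y u p n) =O[atTop]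
      fun n : ℕ => (n : ℝ) ^ (-(2 * u - 1)) * Real.log n ^ (p + 1)) ∧
    (2 * u - 1 < u * (c * (x.re + y.re)) → (fun n => weightedSum r m0 x y u p n) =O[atTop]
      fun n : ℕ => (n : ℝ) ^ (-(2 * u - 1))) := by
  have hW := weightedSum_isBigO_rpow_mul_sum hr0 hr1 hrO hs hm0 hm hu p
  set s := c * (x.re + y.re)
  refine ⟨fun h => hW.trans ((isBigO_refl _ _).mul
    (sum_rpow_mul_log_rpow_isBigO_of_lt (by linarith) hp)), fun h => ?_, fun h => ?_⟩
  · rw [show u * s - 2 * u = -1 by linarith, show -(u * s) = -(2 * u - 1) by linarith] at hW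
    exact hW.trans ((isBigO_refl _ _).mul (sum_rpow_mul_log_rpow_isBigO_of_eq hp))
  · refine (hW.trans ((isBigO_refl _ _).mul
      (sum_rpow_mul_log_rpow_isBigO_of_gt (by linarith) hp))).trans_eventuallyEq
      ((eventually_gt_atTop 0).mono fun n hn => ?_)
    dsimp only
    rw [← Real.rpow_add (by exact_mod_cast hn)]
    ring_nf

theorem product_sum_bigO_general
    (c : ℝ) (r : ℕ → ℝ) (hr0 : ∀ n, 0 ≤ r n) (hr1 : ∀ n, r n < 1)
    (hrO : (fun n : ℕ => (n : ℝ) * r n - c) =O[atTop] fun n : ℕ => (n : ℝ)⁻¹)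
    (x y : ℂ)
    (m0 : ℕ) (hm0 : 2 ≤ m0) (hm : ∀ m, m0 ≤ m → max x.re y.re * r m < 1)
    (u : ℝ) (hu : 1 ≤ u) :
    (c * (x.re + y.re) = 1 →
      (u = 1 →
        (fun n : ℕ => ∑ k ∈ Finset.Ico m0 n, r k ^ (2 * u) *
            (‖pprod r m0 x n‖ * ‖pprod r m0 y n‖ /
              (‖pprod r m0 x k‖ * ‖pprod r m0 y k‖)) ^ u)
          =O[atTop] fun n : ℕ => Real.log n / n) ∧
      (1 < u →
        (fun n : ℕ => ∑ k ∈ Finset.Ico m0 n, r k ^ (2 * u) *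
            (‖pprod r m0 x n‖ * ‖pprod r m0 y n‖ /
              (‖pprod r m0 x k‖ * ‖pprod r m0 y k‖)) ^ u)
          =O[atTop] fun n : ℕ => (n : ℝ) ^ (-u))) ∧
    (1 < c * (x.re + y.re) → ∀ e : ℕ, e ≤ 2 →
      (u * (c * (x.re + y.re)) < 2 * u - 1 →
        (fun n : ℕ => ∑ k ∈ Finset.Ico m0 n, r k ^ (2 * u) *
            Real.log ((n : ℝ) / k) ^ ((e : ℝ) * u) *
            (‖pprod r m0 x n‖ * ‖pprod r m0 y n‖ /
              (‖pprod r m0 x k‖ * ‖pprod r m0 y k‖)) ^ u)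
          =O[atTop] fun n : ℕ =>
            (n : ℝ) ^ (-(u * (c * (x.re + y.re)))) * Real.log n ^ ((e : ℝ) * u)) ∧
      (u * (c * (x.re + y.re)) = 2 * u - 1 →
        (fun n : ℕ => ∑ k ∈ Finset.Ico m0 n, r k ^ (2 * u) *
            Real.log ((n : ℝ) / k) ^ ((e : ℝ) * u) *
            (‖pprod r m0 x n‖ * ‖pprod r m0 y n‖ /
              (‖pprod r m0 x k‖ * ‖pprod r m0 y k‖)) ^ u)
          =O[atTop] fun n : ℕ =>
            (n : ℝ) ^ (-(2 * u - 1)) * Real.log n ^ ((e : ℝ) * u + 1)) ∧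
      (2 * u - 1 < u * (c * (x.re + y.re)) →
        (fun n : ℕ => ∑ k ∈ Finset.Ico m0 n, r k ^ (2 * u) *
            Real.log ((n : ℝ) / k) ^ ((e : ℝ) * u) *
            (‖pprod r m0 x n‖ * ‖pprod r m0 y n‖ /
              (‖pprod r m0 x k‖ * ‖pprod r m0 y k‖)) ^ u)
          =O[atTop] fun n : ℕ => (n : ℝ) ^ (-(2 * u - 1)))) := by
  have hW := fun (hs : 0 ≤ c * (x.re + y.re)) (p : ℝ) (hp : 0 ≤ p) =>
    weightedSum_isBigO hr0 hr1 hrO hs (by omega : 1 ≤ m0) hm (by linarith : 0 ≤ u) hp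
  refine ⟨fun hs => ⟨fun hu1 => ?_, fun hu1 => ?_⟩,
    fun hs e _ => hW (by linarith) _ (by positivity)⟩
  · subst hu1
    have h := (hW (by linarith) 0 le_rfl).2.1 (by rw [hs]; norm_num)
    norm_num [weightedSum, Real.rpow_neg_one, inv_mul_eq_div] at h ⊢
    exact h
  · simpa [weightedSum, hs] using (hW (by linarith) 0 le_rfl).1 (by rw [hs]; linarith)

/-- **Lemma `lemma-tecnico_2` (ii)**: big-O bounds for
`∑_{k=m₀}^{n-1} r_k^{2u} ln^{eu}(n/k) (|p_n(x)||p_n(y)|/(|p_k(x)||p_k(y)|))^u`, `u ≥ 1`,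
in the critical case `c(a_x+a_y) = 1` (with `e = 0`) and in the case `c(a_x+a_y) > 1`
(with `e ∈ {0,1,2}`), according to the position of `uc(a_x+a_y)` relative to `2u-1`. -/
theorem product_sum_bigO
    (c : ℝ) (hc : 0 < c) (r : ℕ → ℝ) (hr0 : ∀ n, 0 ≤ r n) (hr1 : ∀ n, r n < 1)
    (hrO : (fun n : ℕ => (n : ℝ) * r n - c) =O[atTop] fun n : ℕ => (n : ℝ)⁻¹)
    (x y : ℂ) (hx : 0 < x.re) (hy : 0 < y.re)
    (hge : 1 ≤ c * (x.re + y.re))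
    (m0 : ℕ) (hm0 : 2 ≤ m0) (hm : ∀ m, m0 ≤ m → max x.re y.re * r m < 1)
    (u : ℝ) (hu : 1 ≤ u) :
    (c * (x.re + y.re) = 1 →
      (u = 1 →
        (fun n : ℕ => ∑ k ∈ Finset.Ico m0 n, r k ^ (2 * u) *
            (‖pprod r m0 x n‖ * ‖pprod r m0 y n‖ /
              (‖pprod r m0 x k‖ * ‖pprod r m0 y k‖)) ^ u)
          =O[atTop] fun n : ℕ => Real.log n / n) ∧
      (1 < u →
        (fun n : ℕ => ∑ k ∈ Finset.Ico m0 n, r k ^ (2 * u) *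
            (‖pprod r m0 x n‖ * ‖pprod r m0 y n‖ /
              (‖pprod r m0 x k‖ * ‖pprod r m0 y k‖)) ^ u)
          =O[atTop] fun n : ℕ => (n : ℝ) ^ (-u))) ∧
    (1 < c * (x.re + y.re) → ∀ e : ℕ, e ≤ 2 →
      (u * (c * (x.re + y.re)) < 2 * u - 1 →
        (fun n : ℕ => ∑ k ∈ Finset.Ico m0 n, r k ^ (2 * u) *
            Real.log ((n : ℝ) / k) ^ ((e : ℝ) * u) *
            (‖pprod r m0 x n‖ * ‖pprod r m0 y n‖ /
              (‖pprod r m0 x k‖ * ‖pprod r m0 y k‖)) ^ u)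
          =O[atTop] fun n : ℕ =>
            (n : ℝ) ^ (-(u * (c * (x.re + y.re)))) * Real.log n ^ ((e : ℝ) * u)) ∧
      (u * (c * (x.re + y.re)) = 2 * u - 1 →
        (fun n : ℕ => ∑ k ∈ Finset.Ico m0 n, r k ^ (2 * u) *
            Real.log ((n : ℝ) / k) ^ ((e : ℝ) * u) *
            (‖pprod r m0 x n‖ * ‖pprod r m0 y n‖ /
              (‖pprod r m0 x k‖ * ‖pprod r m0 y k‖)) ^ u)
          =O[atTop] fun n : ℕ =>
            (n : ℝ) ^ (-(2 * u - 1)) * Real.log n ^ ((e : ℝ) * u + 1)) ∧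
      (2 * u - 1 < u * (c * (x.re + y.re)) →
        (fun n : ℕ => ∑ k ∈ Finset.Ico m0 n, r k ^ (2 * u) *
            Real.log ((n : ℝ) / k) ^ ((e : ℝ) * u) *
            (‖pprod r m0 x n‖ * ‖pprod r m0 y n‖ /
              (‖pprod r m0 x k‖ * ‖pprod r m0 y k‖)) ^ u)
          =O[atTop] fun n : ℕ => (n : ℝ) ^ (-(2 * u - 1)))) :=
  product_sum_bigO_general c r hr0 hr1 hrO x y m0 hm0 hm u hu

end
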